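/- arXiv:1107.5252 — 3 statements merged into one kernel-verified Lean document; each statement's English description precedes it below -/
import Mathlib

section
/- Let P and Q be relative monads on Δ : Set → Preord, ρ : P → Q a morphism of relative monads, E a category, and M a Q-module with codomain E. Then pullback commutes with derivation: ρ*(M') = (ρ*M)' as P-modules (same object maps and same module substitutions). -/
open CategoryTheory

universe v₂ u u₂

/-- A relative monad on the functor `Δ : Set → Preord` which equips a set with the
discrete (diagonal) preorder.  Since every map out of a discretely preordered set is
monotone, a morphism `Δ X ⟶ P Y` in `Preord` is exactly a function `X → P Y`; the
value of the substitution map is a monotone map `P X ⟶ P Y`. -/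
structure RMonad : Type (u + 1) where
  obj : Type u → Type u
  ord : ∀ X : Type u, Preorder (obj X)
  unit : ∀ {X : Type u}, X → obj X
  bind : ∀ {X Y : Type u}, (X → obj Y) → obj X → obj Y
  bind_mono : ∀ {X Y : Type u} (f : X → obj Y) (a b : obj X),
      (ord X).le a b → (ord Y).le (bind f a) (bind f b)
  bind_unit : ∀ {X Y : Type u} (f : X → obj Y) (x : X), bind f (unit x) = f x
  unit_bind : ∀ {X : Type u} (p : obj X), bind unit p = p
  bind_bind : ∀ {X Y Z : Type u} (f : X → obj Y) (g : Y → obj Z) (p : obj X),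
      bind g (bind f p) = bind (fun x => bind g (f x)) p

attribute [instance] RMonad.ord

/-- The functorial action of a relative monad on `Δ`. -/
def RMonad.map (P : RMonad.{u}) {X Y : Type u} (f : X → Y) : P.obj X → P.obj Y :=
  P.bind (fun x => P.unit (f x))

/-- The shifted map: for `f : Δ V → P W`, `shift f : Δ(V + {*}) → P(W + {*})` sends
the fresh element `*` to `η(*)` and `v ∈ V` to `P(i)(f v)`, `i : W → W + {*}` being
the inclusion. -/
def RMonad.shift (P : RMonad.{u}) {X Y : Type u} (f : X → P.obj Y) :
    Option X → P.obj (Option Y)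
  | none => P.unit none
  | some x => P.map some (f x)

/-- A morphism of relative monads on `Δ`: a family of monotone maps commuting with
units and substitution. -/
structure RMonadHom (P Q : RMonad.{u}) : Type (u + 1) where
  app : ∀ X : Type u, P.obj X → Q.obj X
  mono : ∀ (X : Type u) (a b : P.obj X), a ≤ b → app X a ≤ app X b
  app_unit : ∀ {X : Type u} (x : X), app X (P.unit x) = Q.unit x
  app_bind : ∀ {X Y : Type u} (f : X → P.obj Y) (p : P.obj X),
      app Y (P.bind f p) = Q.bind (fun x => app Y (f x)) (app X p)

/-- A module over a relative monad `P` on `Δ`, with codomain a category `E`. -/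
structure DMod (P : RMonad.{u}) (E : Type u₂) [Category.{v₂} E] where
  obj : Type u → E
  msubst : ∀ {X Y : Type u}, (X → P.obj Y) → (obj X ⟶ obj Y)
  msubst_unit : ∀ X : Type u, msubst (fun x : X => P.unit x) = 𝟙 (obj X)
  msubst_msubst : ∀ {X Y Z : Type u} (f : X → P.obj Y) (g : Y → P.obj Z),
      msubst f ≫ msubst g = msubst (fun x => P.bind g (f x))

lemma RMonad.shift_unit (P : RMonad.{u}) (X : Type u) :
    P.shift (fun x : X => P.unit x) = fun x : Option X => P.unit x := by
  funext x
  cases x with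
  | none => rfl
  | some x => simp [RMonad.shift, RMonad.map, P.bind_unit]

lemma RMonad.shift_bind (P : RMonad.{u}) {X Y Z : Type u} (f : X → P.obj Y)
    (g : Y → P.obj Z) :
    P.shift (fun x => P.bind g (f x)) = fun x => P.bind (P.shift g) (P.shift f x) := by
  funext x
  cases x with
  | none => simp [RMonad.shift, P.bind_unit]
  | some x => simp [RMonad.shift, RMonad.map, P.bind_bind, P.bind_unit]

/-- The derived module: object map `V ↦ M (V + {*})`, with the substitution of `M`
precomposed with the shifted map. -/
def derivDMod {P : RMonad.{u}} {E : Type u₂} [Category.{v₂} E] (M : DMod P E) :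
    DMod P E where
  obj X := M.obj (Option X)
  msubst f := M.msubst (P.shift f)
  msubst_unit X := by
    simp only [RMonad.shift_unit, M.msubst_unit]
  msubst_msubst {X Y Z} f g := by
    simp only [M.msubst_msubst, RMonad.shift_bind]

/-- The pullback of a `Q`-module along a morphism of relative monads `h : P ⟶ Q`. -/
def pbDMod {P Q : RMonad.{u}} (h : RMonadHom P Q) {E : Type u₂} [Category.{v₂} E]
    (M : DMod Q E) : DMod P E where
  obj := M.obj
  msubst f := M.msubst (fun x => h.app _ (f x))
  msubst_unit X := by
    have : (fun x : X => h.app X (P.unit x)) = fun x : X => Q.unit x :=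
      funext fun x => h.app_unit x
    simp only [this, M.msubst_unit]
  msubst_msubst {X Y Z} f g := by
    simp only [M.msubst_msubst]
    congr 1
    funext x
    rw [h.app_bind]

namespace RMonadHom

variable {P Q : RMonad.{u}} (ρ : RMonadHom P Q)

lemma app_map {X Y : Type u} (f : X → Y) (p : P.obj X) :
    ρ.app Y (P.map f p) = Q.map f (ρ.app X p) := by
  simp only [RMonad.map, ρ.app_bind, ρ.app_unit]

lemma app_shift_s11 {X Y : Type u} (f : X → P.obj Y) :
    (fun x => ρ.app (Option Y) (P.shift f x)) = Q.shift fun x => ρ.app Y (f x) := by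
  funext x
  cases x with
  | none => exact ρ.app_unit none
  | some x => exact ρ.app_map some (f x)

end RMonadHom

/-- Pullback commutes with derivation: for a morphism `ρ : P ⟶ Q` of relative monads
on `Δ` and a `Q`-module `M` with codomain `E`, `ρ*(M') = (ρ*M)'` as `P`-modules. -/
theorem pullback_comm_deriv {E : Type u₂} [Category.{v₂} E] (P Q : RMonad.{u})
    (ρ : RMonadHom P Q) (M : DMod Q E) :
    pbDMod ρ (derivDMod M) = derivDMod (pbDMod ρ M) := by
  unfold pbDMod derivDMod
  congr 1
  funext X Y f
  exact congrArg M.msubst (ρ.app_shift_s11 f).symm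
end

section
/- For any 1-signature S, the category Rep^Δ(S) of representations of S in relative monads on Δ : Set → Preord has an initial object. The underlying monad of the initial representation associates to any set V the set of terms of the language specified by S with free variables in V, equipped with the discrete (diagonal) preorder. -/
open CategoryTheory

universe v₂ u u₂

/-- An arity is a list of natural numbers; a 1-signature is a family of arities. -/
structure Sig : Type (u + 1) where
  I : Type u
  ar : I → List ℕ

/-- Context extension: `pow n V` is `V` extended by `n` fresh variables. -/
def pow : ℕ → Type u → Type u
  | 0, V => V
  | n + 1, V => pow n (Option V)

/-- Iterated shifting of a substitution map, for derived modules. -/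
def RMonad.shiftPow (P : RMonad.{u}) :
    ∀ (n : ℕ) {X Y : Type u}, (X → P.obj Y) → (pow n X → P.obj (pow n Y))
  | 0, _, _, f => f
  | n + 1, _, _, f => P.shiftPow n (P.shift f)

/-- A representation of a 1-signature `S` in a relative monad `R` on `Δ`: for each
arity `s = [n₁, …, nₘ]` of `S`, a morphism of `R`-modules `R^s → R`, i.e.\ a family of
monotone maps commuting with the (shifted) substitutions. -/
structure SigRep (S : Sig.{u}) : Type (u + 1) where
  R : RMonad.{u}
  rep : ∀ (i : S.I) (X : Type u),
      (∀ k : Fin (S.ar i).length, R.obj (pow ((S.ar i).get k) X)) → R.obj X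
  rep_mono : ∀ (i : S.I) (X : Type u)
      (a b : ∀ k : Fin (S.ar i).length, R.obj (pow ((S.ar i).get k) X)),
      (∀ k, a k ≤ b k) → rep i X a ≤ rep i X b
  rep_hom : ∀ (i : S.I) (X Y : Type u) (f : X → R.obj Y)
      (a : ∀ k : Fin (S.ar i).length, R.obj (pow ((S.ar i).get k) X)),
      R.bind f (rep i X a)
        = rep i Y (fun k => R.bind (R.shiftPow ((S.ar i).get k) f) (a k))

/-- A morphism of representations: a morphism of the underlying relative monads
commuting with the representation module morphisms. -/
structure SigRepHom {S : Sig.{u}} (A B : SigRep S) : Type (u + 1) where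
  mh : RMonadHom A.R B.R
  mh_rep : ∀ (i : S.I) (X : Type u)
      (a : ∀ k : Fin (S.ar i).length, A.R.obj (pow ((S.ar i).get k) X)),
      mh.app X (A.rep i X a) = B.rep i X (fun k => mh.app _ (a k))

/-- The category `SigRep^Δ(S)` of representations of `S` in relative monads on `Δ`. -/
instance (S : Sig.{u}) : Category (SigRep S) where
  Hom := SigRepHom
  id A := ⟨⟨fun _ p => p, fun _ _ _ h => h, fun _ => rfl, fun _ _ => rfl⟩,
    fun _ _ _ => rfl⟩
  comp {A B C} f g := ⟨⟨fun X p => g.mh.app X (f.mh.app X p),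
      fun X a b h => g.mh.mono X _ _ (f.mh.mono X a b h),
      fun x => by simp only [f.mh.app_unit, g.mh.app_unit],
      fun k p => by simp only [f.mh.app_bind, g.mh.app_bind]⟩,
    fun i X a => by simp only [f.mh_rep, g.mh_rep]⟩
  id_comp f := rfl
  comp_id f := rfl
  assoc f g h := rfl

/-- Terms of the language specified by the 1-signature `S`, in a context extended by
`n` fresh variables: `TermN S V n` is the set of terms with free variables in
`pow n V`.  A term is either a variable, or a constructor `i` of `S` applied to
arguments living in suitably extended contexts. -/
inductive TermN (S : Sig.{u}) (V : Type u) : ℕ → Type u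
  | var : ∀ {n : ℕ}, pow n V → TermN S V n
  | build : ∀ {n : ℕ} (i : S.I),
      (∀ k : Fin (S.ar i).length, TermN S V (n + (S.ar i).get k)) → TermN S V n

/-- The set of terms of the language specified by `S` with free variables in `V`. -/
def Term (S : Sig.{u}) (V : Type u) : Type u := TermN S V 0

/-!
Terms carry an explicit depth: `TermN S V n` has its free variables in `pow n V`, and the
`k`-th argument of a constructor `i` lives at depth `n + (S.ar i).get k`. As `absorbPow` and
`extractPow` identify `TermN S (pow a V) n` with `TermN S V (n + a)`, a family in `R^s` is the
same as an argument list of a constructor.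

Under substitution the terms form a relative monad with the discrete order, and the
constructors give a representation `termRep S`. For any representation `A`, folding a term
(variables to units of `A.R`, constructors to the maps `A.rep i`) is a morphism of
representations; it commutes with substitution because the `A.rep i` commute with the shifted
substitutions. A morphism out of `termRep S` preserves units and the representation maps, so
it agrees with the fold on variables and on constructors, hence everywhere, by induction on
the size of terms.
-/
variable {S : Sig.{u}}

def powMap : ∀ (n : ℕ) {X Y : Type u}, (X → Y) → pow n X → pow n Y
  | 0, _, _, f => f
  | n + 1, _, _, f => powMap n (Option.map f)

theorem powMap_id : ∀ (n : ℕ) {X : Type u} (x : pow n X), powMap n id x = x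
  | 0, _, _ => rfl
  | n + 1, X, x => by
    rw [powMap, Option.map_id]
    exact powMap_id n (X := Option X) x

theorem powMap_comp : ∀ (n : ℕ) {X Y Z : Type u} (f : X → Y) (g : Y → Z) (x : pow n X),
    powMap n g (powMap n f x) = powMap n (g ∘ f) x
  | 0, _, _, _, _, _, _ => rfl
  | n + 1, X, _, _, f, g, x =>
    (powMap_comp n (Option.map f) (Option.map g) (x : pow n (Option X))).trans
      (by rw [Option.map_comp_map]; rfl)

def powCast {V : Type u} {n m : ℕ} (h : n = m) : pow n V → pow m V := fun x => h ▸ x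

theorem powCast_succ {V : Type u} {n m : ℕ} (h : n = m) (h' : n + 1 = m + 1)
    (x : pow n (Option V)) : powCast (V := V) h' x = powCast (V := Option V) h x := by
  subst h; rfl

def powAdd : ∀ (a : ℕ) {n : ℕ} {V : Type u}, pow n (pow a V) → pow (n + a) V
  | 0, _, _, x => x
  | a + 1, n, V, x => powAdd a (n := n) (V := Option V) x

namespace TermN

def rename {V W : Type u} (f : V → W) : ∀ {n : ℕ}, TermN S V n → TermN S W n
  | n, var x => var (powMap n f x)
  | _, build i a => build i fun k => rename f (a k)

theorem rename_id {V : Type u} {n : ℕ} (t : TermN S V n) : rename id t = t := by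
  induction t with
  | var x => exact congrArg var (powMap_id _ x)
  | build i a ih => exact congrArg (build i) (funext ih)

theorem rename_rename {V W U : Type u} (f : V → W) (g : W → U) {n : ℕ} (t : TermN S V n) :
    rename g (rename f t) = rename (g ∘ f) t := by
  induction t with
  | var x => exact congrArg var (powMap_comp _ f g x)
  | build i a ih => exact congrArg (build i) (funext ih)

def absorb {V : Type u} : ∀ {n m : ℕ}, n + 1 = m → TermN S (Option V) n → TermN S V m
  | n, _, h, var x => var (powCast (V := V) h (x : pow (n + 1) V))
  | _, _, h, build i a => build i fun k => absorb (by omega) (a k)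

def absorbPow : ∀ (a : ℕ) {V : Type u} {n : ℕ}, TermN S (pow a V) n → TermN S V (n + a)
  | 0, _, _, t => t
  | a + 1, V, _, t => absorb rfl (absorbPow a (V := Option V) t)

def extract {V : Type u} : ∀ {n m : ℕ}, n = m + 1 → TermN S V n → TermN S (Option V) m
  | _, m, h, var x => var (powCast (V := V) h x : pow (m + 1) V)
  | _, _, h, build i a => build i fun k => extract (by omega) (a k)

def extractPow : ∀ (a : ℕ) {V : Type u} {n : ℕ}, TermN S V (n + a) → TermN S (pow a V) n
  | 0, _, _, t => t
  | a + 1, V, _, t => extractPow a (V := Option V) (extract rfl t)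

theorem absorb_extract {V : Type u} {n : ℕ} (t : TermN S V n) :
    ∀ {m : ℕ} (h : n = m + 1) (h' : m + 1 = n), absorb h' (extract h t) = t := by
  induction t with
  | var x => intro m h h'; subst h; rfl
  | build i a ih => intro m h h'; exact congrArg (build i) (funext fun k => ih k _ _)

theorem absorbPow_extractPow : ∀ (a : ℕ) {V : Type u} {n : ℕ} (t : TermN S V (n + a)),
    absorbPow a (extractPow a t) = t
  | 0, _, _, _ => rfl
  | a + 1, _, _, t => by
    show absorb rfl (absorbPow a (extractPow a (extract rfl t))) = t
    rw [absorbPow_extractPow a]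
    exact absorb_extract t rfl rfl

theorem rename_absorb {V W : Type u} (j : V → W) {n : ℕ} (t : TermN S (Option V) n) :
    ∀ {m : ℕ} (h : n + 1 = m), rename j (absorb h t) = absorb h (rename (Option.map j) t) := by
  induction t with
  | var x => intro m h; subst h; rfl
  | build i a ih => intro m h; exact congrArg (build i) (funext fun k => ih k _)

def shiftSubst {V W : Type u} (f : V → Term S W) : Option V → Term S (Option W)
  | none => var none
  | some v => rename some (f v)

/-- The substitution `f` acting on the variables of a term at depth `n`: the `n` innermost
bound variables are left in place. -/
def liftSubst : ∀ (n : ℕ) {V W : Type u}, (V → Term S W) → pow n V → TermN S W n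
  | 0, _, _, f => f
  | n + 1, _, _, f => fun x => absorb rfl (liftSubst n (shiftSubst f) x)

def subst {V W : Type u} (f : V → Term S W) : ∀ {n : ℕ}, TermN S V n → TermN S W n
  | n, var x => liftSubst n f x
  | _, build i a => build i fun k => subst f (a k)

theorem shiftSubst_var_comp {V W : Type u} (j : V → W) :
    shiftSubst (S := S) (fun v => var (j v)) = fun v => var (n := 0) (Option.map j v) := by
  funext v; cases v <;> rfl

theorem liftSubst_var_comp : ∀ (n : ℕ) {V W : Type u} (j : V → W) (x : pow n V),
    liftSubst (S := S) n (fun v => var (j v)) x = var (powMap n j x)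
  | 0, _, _, _, _ => rfl
  | n + 1, V, _, j, x => by
    change pow n (Option V) at x
    show absorb rfl (liftSubst n (shiftSubst fun v => var (j v)) x) = _
    rw [shiftSubst_var_comp, liftSubst_var_comp n]
    rfl

theorem subst_var_comp {V W : Type u} (j : V → W) {n : ℕ} (t : TermN S V n) :
    subst (fun v => var (j v)) t = rename j t := by
  induction t with
  | var x => exact liftSubst_var_comp _ j x
  | build i a ih => exact congrArg (build i) (funext ih)

theorem subst_var {V : Type u} {n : ℕ} (t : TermN S V n) : subst (fun v => var v) t = t :=
  (subst_var_comp id t).trans (rename_id t)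

theorem subst_absorb {V W : Type u} (g : V → Term S W) {n : ℕ} (t : TermN S (Option V) n) :
    ∀ {m : ℕ} (h : n + 1 = m), subst g (absorb h t) = absorb h (subst (shiftSubst g) t) := by
  induction t with
  | var x => intro m h; subst h; rfl
  | build i a ih => intro m h; exact congrArg (build i) (funext fun k => ih k _)

theorem liftSubst_rename : ∀ (n : ℕ) {V V' W W' : Type u} (ι : V → V') (j : W → W')
    (g : V → Term S W) (g' : V' → Term S W'), (∀ v, g' (ι v) = rename j (g v)) →
    ∀ x : pow n V, liftSubst n g' (powMap n ι x) = rename j (liftSubst n g x)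
  | 0, _, _, _, _, _, _, _, _, hg, x => hg x
  | n + 1, _, _, _, _, ι, j, g, g', hg, x => by
    show absorb rfl (liftSubst n (shiftSubst g') (powMap n (Option.map ι) x))
      = rename j (absorb rfl (liftSubst n (shiftSubst g) x))
    rw [rename_absorb]
    refine congrArg _ (liftSubst_rename n _ _ (shiftSubst g) (shiftSubst g') ?_ x)
    rintro (_ | v)
    · rfl
    · show rename some (g' (ι v)) = rename (Option.map j) (rename some (g v))
      rw [hg v]
      exact (rename_rename j some (g v)).trans (rename_rename some (Option.map j) (g v)).symm

theorem subst_rename {V V' W W' : Type u} {n : ℕ} (t : TermN S V n) (ι : V → V') (j : W → W')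
    (g : V → Term S W) (g' : V' → Term S W') (hg : ∀ v, g' (ι v) = rename j (g v)) :
    subst g' (rename ι t) = rename j (subst g t) := by
  induction t with
  | var x => exact liftSubst_rename _ ι j g g' hg x
  | build i a ih => exact congrArg (build i) (funext ih)

theorem shiftSubst_subst {V W U : Type u} (f : V → Term S W) (g : W → Term S U) :
    shiftSubst (fun v => subst g (f v)) = fun v => subst (shiftSubst g) (shiftSubst f v) := by
  funext v
  cases v with
  | none => rfl
  | some v => exact (subst_rename (f v) some some g (shiftSubst g) fun _ => rfl).symm

theorem subst_liftSubst : ∀ (n : ℕ) {V W U : Type u} (f : V → Term S W) (g : W → Term S U)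
    (x : pow n V), subst g (liftSubst n f x) = liftSubst n (fun v => subst g (f v)) x
  | 0, _, _, _, _, _, _ => rfl
  | n + 1, V, _, _, f, g, x => by
    change pow n (Option V) at x
    show subst g (absorb rfl (liftSubst n (shiftSubst f) x))
      = absorb rfl (liftSubst n (shiftSubst fun v => subst g (f v)) x)
    rw [subst_absorb, subst_liftSubst n, shiftSubst_subst]

theorem subst_subst {V W U : Type u} {n : ℕ} (t : TermN S V n) (f : V → Term S W)
    (g : W → Term S U) : subst g (subst f t) = subst (fun v => subst g (f v)) t := by
  induction t with
  | var x => exact subst_liftSubst _ f g x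
  | build i a ih => exact congrArg (build i) (funext ih)

end TermN

open TermN

instance Term.instPreorder (S : Sig.{u}) (X : Type u) : Preorder (Term S X) where
  le a b := a = b
  le_refl _ := rfl
  le_trans _ _ _ := Eq.trans

def termMonad (S : Sig.{u}) : RMonad.{u} where
  obj := Term S
  ord := Term.instPreorder S
  unit x := var x
  bind f t := subst f t
  bind_mono f _ _ h := congrArg (subst f) h
  bind_unit _ _ := rfl
  unit_bind := subst_var
  bind_bind f g p := subst_subst p f g

theorem termMonad_shift {V W : Type u} (f : V → Term S W) :
    (termMonad S).shift f = shiftSubst f := by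
  funext v
  cases v with
  | none => rfl
  | some v => exact subst_var_comp some (f v)

theorem subst_absorbPow : ∀ (a : ℕ) {V W : Type u} {n : ℕ} (f : V → Term S W)
    (t : TermN S (pow a V) n),
    subst f (absorbPow a t) = absorbPow a (subst ((termMonad S).shiftPow a f) t)
  | 0, _, _, _, _, _ => rfl
  | a + 1, V, _, n, f, t => by
    change TermN S (pow a (Option V)) n at t
    show subst f (absorb rfl (absorbPow a t))
      = absorb rfl (absorbPow a (subst ((termMonad S).shiftPow a ((termMonad S).shift f)) t))
    rw [subst_absorb, subst_absorbPow a, termMonad_shift]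

def termRep (S : Sig.{u}) : SigRep S where
  R := termMonad S
  rep i _ c := build i fun k => absorbPow _ (c k)
  rep_mono i _ _ _ h := congrArg (build i) (funext fun k => congrArg _ (h k))
  rep_hom i _ _ f c := congrArg (build i) (funext fun k => subst_absorbPow _ f (c k))

namespace RMonad

variable (M : RMonad.{u})

/-- `M.shift` applied beneath `n` bound variables. -/
def shiftEnv : ∀ (n : ℕ) {V X : Type u},
    (pow n V → M.obj X) → pow n (Option V) → M.obj (Option X)
  | 0, _, _, ρ => M.shift ρ
  | n + 1, V, _, ρ => shiftEnv n (V := Option V) ρ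

/-- The environment of the `a` extra bound variables of a constructor argument. -/
def liftEnv : ∀ (a : ℕ) {n : ℕ} {V X : Type u},
    (pow n V → M.obj X) → pow (n + a) V → M.obj (pow a X)
  | 0, _, _, _, ρ => ρ
  | a + 1, n, V, _, ρ => liftEnv a (V := Option V) (M.shiftEnv n ρ)

theorem liftEnv_powCast (a : ℕ) {n m : ℕ} (h : n + 1 = m) (hk : n + a + 1 = m + a)
    {V X : Type u} (ρ : pow m V → M.obj X) (x : pow (n + a) (Option V)) :
    M.liftEnv a ρ (powCast hk x) = M.liftEnv a (V := Option V) (fun y => ρ (powCast h y)) x := by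
  subst h
  induction a generalizing V X with
  | zero => rfl
  | succ a ih =>
    show M.liftEnv a (V := Option V) (M.shiftEnv (n + 1) (V := V) ρ) (powCast (V := V) hk x)
      = M.liftEnv a (V := Option (Option V)) (M.shiftEnv n (V := Option V) ρ) x
    rw [powCast_succ (m := n + 1 + a) (by omega) hk x]
    exact ih (x := x) (ρ := M.shiftEnv (n + 1) (V := V) ρ) (hk := by omega)

theorem shift_unit_s14 {V : Type u} : M.shift (fun v : V => M.unit v) = fun v => M.unit v := by
  funext v
  cases v with
  | none => rfl
  | some v => exact M.bind_unit _ v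

theorem shiftEnv_bind : ∀ (n : ℕ) {V X Y : Type u} (g : X → M.obj Y)
    (ρ : pow n V → M.obj X) (y : pow n (Option V)),
    M.shiftEnv n (fun x => M.bind g (ρ x)) y = M.bind (M.shift g) (M.shiftEnv n ρ y)
  | n + 1, V, _, _, g, ρ, y => shiftEnv_bind n (V := Option V) g ρ y
  | 0, _, _, _, g, _, none => (M.bind_unit (M.shift g) none).symm
  | 0, _, _, _, g, ρ, some v => by
    show M.bind (fun x => M.unit (some x)) (M.bind g (ρ v))
      = M.bind (M.shift g) (M.bind (fun x => M.unit (some x)) (ρ v))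
    simp only [M.bind_bind, M.bind_unit]
    rfl

theorem liftEnv_bind : ∀ (a : ℕ) {n : ℕ} {V X Y : Type u} (g : X → M.obj Y)
    (ρ : pow n V → M.obj X) (y : pow (n + a) V),
    M.liftEnv a (fun x => M.bind g (ρ x)) y = M.bind (M.shiftPow a g) (M.liftEnv a ρ y)
  | 0, _, _, _, _, _, _, _ => rfl
  | a + 1, n, _, _, _, g, ρ, y => by
    show M.liftEnv a (M.shiftEnv n fun x => M.bind g (ρ x)) y = _
    rw [funext (M.shiftEnv_bind n g ρ)]
    exact liftEnv_bind a (M.shift g) (M.shiftEnv n ρ) y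

theorem shiftEnv_powMap : ∀ (n : ℕ) {V W X : Type u} (j : V → W) (ρ : pow n W → M.obj X)
    (y : pow n (Option V)),
    M.shiftEnv n (fun x => ρ (powMap n j x)) y = M.shiftEnv n ρ (powMap n (Option.map j) y)
  | n + 1, _, _, _, j, ρ, y => shiftEnv_powMap n (Option.map j) ρ y
  | 0, _, _, _, _, _, none => rfl
  | 0, _, _, _, _, _, some _ => rfl

theorem liftEnv_powMap : ∀ (a : ℕ) {n : ℕ} {V W X : Type u} (j : V → W)
    (ρ : pow n W → M.obj X) (y : pow (n + a) V),
    M.liftEnv a (fun x => ρ (powMap n j x)) y = M.liftEnv a ρ (powMap (n + a) j y)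
  | 0, _, _, _, _, _, _, _ => rfl
  | a + 1, n, _, _, _, j, ρ, y => by
    show M.liftEnv a (M.shiftEnv n fun x => ρ (powMap n j x)) y = _
    rw [funext (M.shiftEnv_powMap n j ρ)]
    exact liftEnv_powMap a (Option.map j) (M.shiftEnv n ρ) y

end RMonad

namespace SigRep

variable (A : SigRep S)

def eval {V : Type u} : ∀ {n : ℕ}, TermN S V n → ∀ {X : Type u}, (pow n V → A.R.obj X) → A.R.obj X
  | _, var x, _, ρ => ρ x
  | _, build i a, X, ρ => A.rep i X fun k => eval (a k) (A.R.liftEnv _ ρ)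

theorem eval_absorb {V : Type u} {n : ℕ} (t : TermN S (Option V) n) :
    ∀ {m : ℕ} (h : n + 1 = m) {X : Type u} (ρ : pow m V → A.R.obj X),
    A.eval (absorb h t) ρ = A.eval t (fun x => ρ (powCast h x)) := by
  induction t with
  | var x => intro m h X ρ; subst h; rfl
  | build i a ih =>
    intro m h X ρ
    refine congrArg (A.rep i X) (funext fun k => ?_)
    rw [ih k]
    exact congrArg _ (funext fun x => A.R.liftEnv_powCast _ h _ ρ x)

theorem bind_eval {V : Type u} {n : ℕ} (t : TermN S V n) {X Y : Type u} (g : X → A.R.obj Y)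
    (ρ : pow n V → A.R.obj X) : A.R.bind g (A.eval t ρ) = A.eval t (fun x => A.R.bind g (ρ x)) := by
  induction t generalizing X Y with
  | var x => rfl
  | build i a ih =>
    rw [eval, eval, A.rep_hom]
    refine congrArg _ (funext fun k => ?_)
    rw [ih k]
    exact congrArg _ (funext fun x => (A.R.liftEnv_bind _ g ρ x).symm)

theorem eval_rename {V W : Type u} {n : ℕ} (j : V → W) (t : TermN S V n) {X : Type u}
    (ρ : pow n W → A.R.obj X) : A.eval (rename j t) ρ = A.eval t (fun x => ρ (powMap n j x)) := by
  induction t generalizing X with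
  | var x => rfl
  | build i a ih =>
    refine congrArg (A.rep i X) (funext fun k => ?_)
    rw [ih k]
    exact congrArg _ (funext fun x => (A.R.liftEnv_powMap _ j ρ x).symm)

theorem shiftEnv_eval_liftSubst : ∀ (n : ℕ) {V W X : Type u} (f : V → Term S W)
    (ρ : pow n W → A.R.obj X) (y : pow n (Option V)),
    A.R.shiftEnv n (fun x => A.eval (liftSubst n f x) ρ) y
      = A.eval (liftSubst n (shiftSubst f) y) (A.R.shiftEnv n ρ)
  | 0, _, _, _, _, _, none => rfl
  | 0, _, _, _, f, ρ, some v => by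
    exact (A.bind_eval (f v) _ ρ).trans (A.eval_rename some (f v) (A.R.shift ρ)).symm
  | n + 1, V, W, _, f, ρ, y => by
    show A.R.shiftEnv n (V := Option V)
        (fun x => A.eval (absorb rfl (liftSubst n (shiftSubst f) x)) ρ) y
      = A.eval (absorb rfl (liftSubst n (shiftSubst (shiftSubst f)) y)) (A.R.shiftEnv (n + 1) ρ)
    simp only [eval_absorb]
    exact shiftEnv_eval_liftSubst n (V := Option V) (W := Option W) (shiftSubst f) ρ y

theorem liftEnv_eval_liftSubst : ∀ (a : ℕ) {n : ℕ} {V W X : Type u} (f : V → Term S W)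
    (ρ : pow n W → A.R.obj X) (y : pow (n + a) V),
    A.R.liftEnv a (fun x => A.eval (liftSubst n f x) ρ) y
      = A.eval (liftSubst (n + a) f y) (A.R.liftEnv a ρ)
  | 0, _, _, _, _, _, _, _ => rfl
  | a + 1, n, V, _, _, f, ρ, y => by
    change pow (n + a) (Option V) at y
    show A.R.liftEnv a (A.R.shiftEnv n fun x => A.eval (liftSubst n f x) ρ) y
      = A.eval (absorb rfl (liftSubst (n + a) (shiftSubst f) y)) _
    rw [funext (A.shiftEnv_eval_liftSubst n f ρ), liftEnv_eval_liftSubst a]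
    exact (A.eval_absorb _ rfl _).symm

theorem eval_subst {V W : Type u} {n : ℕ} (t : TermN S V n) (f : V → Term S W) {X : Type u}
    (ρ : pow n W → A.R.obj X) :
    A.eval (subst f t) ρ = A.eval t (fun x => A.eval (liftSubst n f x) ρ) := by
  induction t generalizing X with
  | var x => rfl
  | build i a ih =>
    refine congrArg (A.rep i X) (funext fun k => ?_)
    rw [ih k]
    exact congrArg _ (funext fun y => (A.liftEnv_eval_liftSubst _ f ρ y).symm)

end SigRep

namespace SigRep

variable (A : SigRep S)

theorem eval_absorbPow : ∀ (a : ℕ) {V : Type u} {n : ℕ} (t : TermN S (pow a V) n) {X : Type u}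
    (ρ : pow (n + a) V → A.R.obj X), A.eval (absorbPow a t) ρ = A.eval t (fun x => ρ (powAdd a x))
  | 0, _, _, _, _, _ => rfl
  | a + 1, V, _, t, _, ρ => by
    change TermN S (pow a (Option V)) _ at t
    exact (A.eval_absorb (absorbPow a t) rfl ρ).trans (eval_absorbPow a (V := Option V) t ρ)

theorem liftEnv_unit_powAdd : ∀ (a : ℕ) {V : Type u} (x : pow 0 (pow a V)),
    A.R.liftEnv a (n := 0) (fun v => A.R.unit v) (powAdd a x) = A.R.unit x
  | 0, _, _ => rfl
  | a + 1, V, x => by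
    show A.R.liftEnv a (V := Option V) (A.R.shift fun v => A.R.unit v) (powAdd a (n := 0) x) = _
    rw [A.R.shift_unit_s14]
    exact liftEnv_unit_powAdd a (V := Option V) x

theorem eval_termRep_rep (i : S.I) (X : Type u)
    (c : ∀ k : Fin (S.ar i).length, Term S (pow ((S.ar i).get k) X)) :
    A.eval ((termRep S).rep i X c) (fun v => A.R.unit v)
      = A.rep i X fun k => A.eval (c k) (fun v => A.R.unit v) := by
  refine congrArg (A.rep i X) (funext fun k => ?_)
  exact (A.eval_absorbPow _ (c k) _).trans (congrArg _ (funext (A.liftEnv_unit_powAdd _)))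

def termRepHom : SigRepHom (termRep S) A where
  mh :=
    { app _ t := A.eval t (fun v => A.R.unit v)
      mono _ _ _ h := h ▸ le_rfl
      app_unit _ := rfl
      app_bind f p := (A.eval_subst p f _).trans <|
        (congrArg (A.eval p) (funext fun v => (A.R.bind_unit _ v).symm)).trans
          (A.bind_eval p _ _).symm }
  mh_rep := A.eval_termRep_rep

end SigRep

namespace TermN

def size {V : Type u} : ∀ {n : ℕ}, TermN S V n → ℕ
  | _, var _ => 1
  | _, build _ a => 1 + ∑ k, size (a k)

theorem size_extract {V : Type u} {n : ℕ} (t : TermN S V n) :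
    ∀ {m : ℕ} (h : n = m + 1), size (extract h t) = size t := by
  induction t with
  | var x => intro m h; rfl
  | build i a ih => intro m h; exact congrArg (1 + ·) (Finset.sum_congr rfl fun k _ => ih k _)

theorem size_extractPow : ∀ (a : ℕ) {V : Type u} {n : ℕ} (t : TermN S V (n + a)),
    size (extractPow a t) = size t
  | 0, _, _, _ => rfl
  | a + 1, _, _, t => (size_extractPow a (extract rfl t)).trans (size_extract t rfl)

theorem size_lt_size_build {V : Type u} {n : ℕ} (i : S.I)
    (a : ∀ k : Fin (S.ar i).length, TermN S V (n + (S.ar i).get k)) (k : Fin (S.ar i).length) :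
    size (a k) < size (build i a) := by
  have := Finset.single_le_sum (f := fun k => size (a k)) (fun _ _ => Nat.zero_le _)
    (Finset.mem_univ k)
  simp only [size]
  omega

end TermN

theorem SigRepHom.ext_app {A B : SigRep S} {f g : SigRepHom A B}
    (h : ∀ (X : Type u) (t : A.R.obj X), f.mh.app X t = g.mh.app X t) : f = g := by
  obtain ⟨⟨fa, _, _, _⟩, _⟩ := f
  obtain ⟨⟨ga, _, _, _⟩, _⟩ := g
  obtain rfl : fa = ga := funext fun X => funext (h X)
  rfl

theorem SigRepHom.app_eq_termRepHom_app {A : SigRep S} (g : SigRepHom (termRep S) A)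
    {V : Type u} (t : Term S V) : g.mh.app V t = (A.termRepHom).mh.app V t :=
  match t with
  | var x => g.mh.app_unit x
  | build i a => by
    have hrepr : (build i a : Term S V) = (termRep S).rep i V (fun k => extractPow _ (a k)) :=
      congrArg (build i) (funext fun k => (absorbPow_extractPow _ (a k)).symm)
    rw [hrepr]
    exact (g.mh_rep i V _).trans <|
      (congrArg (A.rep i V) (funext fun k => app_eq_termRepHom_app g _)).trans
        (A.termRepHom.mh_rep i V _).symm
termination_by size t
decreasing_by exact (size_extractPow _ (a k)).trans_lt (size_lt_size_build i a k)

/-- The category `Rep^Δ(S)` of representations of a 1-signature `S` in relative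
monads on `Δ` has an initial object; the underlying monad of the initial
representation associates to any set `V` the set of terms of the language specified
by `S` with free variables in `V`, equipped with the discrete (diagonal) preorder. -/
theorem initial_representation (S : Sig.{u}) :
    ∃ Z : SigRep S, Nonempty (Limits.IsInitial Z) ∧
      Z.R.obj = (fun V => Term S V) ∧
      (∀ (V : Type u) (x y : Z.R.obj V), x ≤ y ↔ x = y) := by
  refine ⟨termRep S, ⟨Limits.IsInitial.ofUniqueHom SigRep.termRepHom ?_⟩, rfl,
    fun _ _ _ => Iff.rfl⟩
  exact fun A g => SigRepHom.ext_app fun _ t => g.app_eq_termRepHom_app t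
end

section
/- Let S be a 1-signature and let Σ denote the initial representation of S in Rep^Δ(S). Let A be a set of S-inequations, and for each representation R of (S, A) let i_R : Σ → R denote the initial morphism of representations of S. Define the preorder ≤_A on each set Σ(X) by: x ≤_A y iff for all representations R of (S, A), i_R(x) ≤ i_R(y) in R(X). Then for any algebraic S-module V, any set X, and any x, y ∈ V(Σ)(X): x ≤_A y (with respect to the preorder on V(Σ)(X) induced componentwise by ≤_A) if and only if for all representations R of (S, A), V(i_R)(x) ≤ V(i_R)(y) in V(R)(X). -/
open CategoryTheory

universe v₂ u u₂

/-- A module over a relative monad `P` on `Δ`, with codomain the category `PS` of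
preordered sets and arbitrary (not necessarily monotone) maps: an object map sending
sets to preordered sets, together with a module substitution (a plain map) satisfying
the two module laws. -/
structure PSMod (P : RMonad.{u}) : Type (u + 1) where
  obj : Type u → Type u
  ord : ∀ X : Type u, Preorder (obj X)
  msubst : ∀ {X Y : Type u}, (X → P.obj Y) → obj X → obj Y
  msubst_unit : ∀ {X : Type u} (m : obj X), msubst (fun x : X => P.unit x) m = m
  msubst_msubst : ∀ {X Y Z : Type u} (f : X → P.obj Y) (g : Y → P.obj Z) (m : obj X),
      msubst g (msubst f m) = msubst (fun x => P.bind g (f x)) m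

attribute [instance] PSMod.ord

/-- A morphism of `P`-modules with codomain `PS`: a family of (not necessarily
monotone) maps commuting with the module substitutions. -/
structure PSModHom {P : RMonad.{u}} (M N : PSMod P) : Type (u + 1) where
  app : ∀ X : Type u, M.obj X → N.obj X
  comm : ∀ {X Y : Type u} (f : X → P.obj Y) (m : M.obj X),
      app Y (M.msubst f m) = N.msubst f (app X m)

/-- The tautological module of `P`, regarded as a module with codomain `PS`. -/
def tautPS (P : RMonad.{u}) : PSMod P :=
  ⟨P.obj, P.ord, P.bind, P.unit_bind, P.bind_bind⟩

/-- The derived module: object map `V ↦ M (V + {*})`, with the substitution of `M`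
precomposed with the shifted map. -/
def derivPS {P : RMonad.{u}} (M : PSMod P) : PSMod P where
  obj X := M.obj (Option X)
  ord X := M.ord (Option X)
  msubst f := M.msubst (P.shift f)
  msubst_unit m := by simp only [RMonad.shift_unit, M.msubst_unit]
  msubst_msubst f g m := by simp only [M.msubst_msubst, RMonad.shift_bind]

/-- The product of two `P`-modules with codomain `PS`, with componentwise
substitution and the product preorder. -/
def prodPS {P : RMonad.{u}} (M N : PSMod P) : PSMod P where
  obj X := M.obj X × N.obj X
  ord X := inferInstance
  msubst f m := (M.msubst f m.1, N.msubst f m.2)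
  msubst_unit m := by simp [M.msubst_unit, N.msubst_unit]
  msubst_msubst f g m := by simp [M.msubst_msubst, N.msubst_msubst]

/-- The pullback of a `Q`-module with codomain `PS` along a morphism of relative
monads `h : P ⟶ Q`. -/
def pbPS {P Q : RMonad.{u}} (h : RMonadHom P Q) (M : PSMod Q) : PSMod P where
  obj := M.obj
  ord := M.ord
  msubst f := M.msubst (fun x => h.app _ (f x))
  msubst_unit {X} m := by
    have e : (fun x : X => h.app X (P.unit x)) = fun x : X => Q.unit x :=
      funext fun x => h.app_unit x
    show M.msubst (fun x : X => h.app X (P.unit x)) m = m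
    rw [e, M.msubst_unit]
  msubst_msubst {X Y Z} f g m := by
    show M.msubst (fun x => h.app Z (g x)) (M.msubst (fun x => h.app Y (f x)) m)
      = M.msubst (fun x => h.app Z (P.bind g (f x))) m
    rw [M.msubst_msubst]
    congr 1
    funext x
    rw [h.app_bind]

/-- An `S`-module: a functor from the category `Rep^Δ(S)` of representations of `S`
to the category of pairs (relative monad on `Δ`, module over it with codomain `PS`)
commuting with the forgetful functor to relative monads on `Δ`.  Concretely: each
representation `R` is sent to an `R`-module `M R` with codomain `PS`, and each
morphism of representations `f : A ⟶ B` to a module morphism `M A → f*(M B)` over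
the monad morphism `f` itself, functorially. -/
structure SMod (S : Sig.{u}) : Type (u + 1) where
  M : ∀ R : SigRep S, PSMod R.R
  Mmap : ∀ {A B : SigRep S} (f : A ⟶ B), PSModHom (M A) (pbPS f.mh (M B))
  Mmap_id : ∀ A : SigRep S, (Mmap (𝟙 A)).app = fun _ m => m
  Mmap_comp : ∀ {A B C : SigRep S} (f : A ⟶ B) (g : B ⟶ C),
      (Mmap (f ≫ g)).app = fun X m => (Mmap g).app X ((Mmap f).app X m)

/-- A half-equation: a morphism of `S`-modules, i.e.\ a natural transformation which
becomes the identity when composed with the forgetful functor to relative monads. -/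
structure HalfEq {S : Sig.{u}} (U V : SMod S) : Type (u + 1) where
  app : ∀ R : SigRep S, PSModHom (U.M R) (V.M R)
  natural : ∀ {A B : SigRep S} (f : A ⟶ B) (X : Type u) (m : (U.M A).obj X),
      (app B).app X ((U.Mmap f).app X m) = (V.Mmap f).app X ((app A).app X m)

/-- The category of `S`-modules and half-equations. -/
instance (S : Sig.{u}) : Category (SMod S) where
  Hom := HalfEq
  id U := ⟨fun R => ⟨fun _ m => m, fun _ _ => rfl⟩, fun _ _ _ => rfl⟩
  comp {U V W} α β := ⟨fun R => ⟨fun X m => (β.app R).app X ((α.app R).app X m),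
      fun f m => by simp only [(α.app _).comm, (β.app _).comm]⟩,
    fun f X m => by simp only [α.natural, β.natural] <;> rfl⟩
  id_comp f := rfl
  comp_id f := rfl
  assoc f g h := rfl

lemma RMonadHom.app_shift {P Q : RMonad.{u}} (h : RMonadHom P Q) {X Y : Type u}
    (f : X → P.obj Y) :
    (fun x => h.app (Option Y) (P.shift f x)) = Q.shift (fun x => h.app Y (f x)) := by
  funext x
  cases x with
  | none => simp [RMonad.shift, h.app_unit]
  | some x => simp [RMonad.shift, RMonad.map, h.app_bind, h.app_unit]

/-- The tautological `S`-module `Θ : R ↦ R̂`. -/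
def tautSMod (S : Sig.{u}) : SMod S where
  M R := tautPS R.R
  Mmap {_ _} f := ⟨f.mh.app, fun g m => f.mh.app_bind g m⟩
  Mmap_id _ := rfl
  Mmap_comp _ _ := rfl

/-- The derivation of an `S`-module. -/
def derivSMod {S : Sig.{u}} (U : SMod S) : SMod S where
  M R := derivPS (U.M R)
  Mmap {A B} f :=
    ⟨fun X m => (U.Mmap f).app (Option X) m, by
      intro X Y g (m : (U.M A).obj (Option X))
      show (U.Mmap f).app (Option Y) ((U.M A).msubst (A.R.shift g) m)
        = (U.M B).msubst (B.R.shift (fun x => f.mh.app Y (g x)))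
            ((U.Mmap f).app (Option X) m)
      rw [(U.Mmap f).comm]
      show (U.M B).msubst (fun x => f.mh.app (Option Y) (A.R.shift g x))
            ((U.Mmap f).app (Option X) m) = _
      rw [RMonadHom.app_shift]⟩
  Mmap_id _ := by simp only [U.Mmap_id] <;> rfl
  Mmap_comp _ _ := by simp only [U.Mmap_comp] <;> rfl

/-- The product of two `S`-modules. -/
def prodSMod {S : Sig.{u}} (U V : SMod S) : SMod S where
  M R := prodPS (U.M R) (V.M R)
  Mmap {A B} f :=
    ⟨fun X m => ((U.Mmap f).app X m.1, (V.Mmap f).app X m.2), by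
      intro X Y g m
      show ((U.Mmap f).app Y ((U.M A).msubst g m.1),
            (V.Mmap f).app Y ((V.M A).msubst g m.2)) = _
      rw [(U.Mmap f).comm, (V.Mmap f).comm]
      rfl⟩
  Mmap_id _ := by
    simp only [U.Mmap_id, V.Mmap_id]
    rfl
  Mmap_comp f g := by
    simp only [U.Mmap_comp, V.Mmap_comp] <;> rfl

/-- Codes for algebraic `S`-modules: the tautological `S`-module is algebraic, and
algebraic `S`-modules are closed under derivation and binary products. -/
inductive AlgCode : Type u
  | taut : AlgCode
  | deriv : AlgCode → AlgCode
  | prod : AlgCode → AlgCode → AlgCode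

/-- The algebraic `S`-module determined by a code. -/
def algSMod (S : Sig.{u}) : AlgCode.{u} → SMod S
  | .taut => tautSMod S
  | .deriv c => derivSMod (algSMod S c)
  | .prod c d => prodSMod (algSMod S c) (algSMod S d)

/-- An `S`-inequation: a pair of parallel half-equations. -/
structure Ineq (S : Sig.{u}) : Type (u + 1) where
  dom : SMod S
  cod : SMod S
  lhs : HalfEq dom cod
  rhs : HalfEq dom cod

/-- A representation `R` of `S` satisfies the inequation `α ≤ γ : U → V` if
`α^R_X(m) ≤ γ^R_X(m)` pointwise. -/
def satisfies {S : Sig.{u}} (R : SigRep S) (e : Ineq S) : Prop :=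
  ∀ (X : Type u) (m : (e.dom.M R).obj X),
    (e.lhs.app R).app X m ≤ (e.rhs.app R).app X m

/-- The componentwise extension of a family of relations on the carriers of (the
monad underlying) a representation `R` to the carriers of an algebraic `S`-module. -/
def algRel {S : Sig.{u}} (R : SigRep S)
    (r : ∀ X : Type u, R.R.obj X → R.R.obj X → Prop) :
    ∀ (c : AlgCode.{u}) (X : Type u),
      ((algSMod S c).M R).obj X → ((algSMod S c).M R).obj X → Prop
  | .taut, X, a, b => r X a b
  | .deriv c, X, a, b => algRel R r c (Option X) a b
  | .prod c d, X, a, b => algRel R r c X a.1 b.1 ∧ algRel R r d X a.2 b.2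

section AlgRel

variable {S : Sig.{u}}

theorem algRel_forall {ι : Sort*} (R : SigRep S)
    (r : ι → ∀ X : Type u, R.R.obj X → R.R.obj X → Prop) (c : AlgCode.{u}) (X : Type u)
    (x y : ((algSMod S c).M R).obj X) :
    algRel R (fun Z a b => ∀ i, r i Z a b) c X x y ↔ ∀ i, algRel R (r i) c X x y := by
  induction c generalizing X with
  | taut => rfl
  | deriv c ih => exact ih (Option X) x y
  | prod c d ihc ihd => simp only [algRel, ihc, ihd, forall_and]

theorem algRel_comap_le_iff {A B : SigRep S} (f : A ⟶ B) (c : AlgCode.{u}) (X : Type u)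
    (x y : ((algSMod S c).M A).obj X) :
    algRel A (fun Z a b => f.mh.app Z a ≤ f.mh.app Z b) c X x y
      ↔ ((algSMod S c).Mmap f).app X x ≤ ((algSMod S c).Mmap f).app X y := by
  induction c generalizing X with
  | taut => rfl
  | deriv c ih => exact ih (Option X) x y
  | prod c d ihc ihd => exact (and_congr (ihc X x.1 y.1) (ihd X x.2 y.2)).trans Prod.mk_le_mk

end AlgRel

/-- Let `Sigma0` be the initial representation of `S`, let `A` be a set of
`S`-inequations, and for a representation `R` of `(S, A)` let `i_R : Sigma0 ⟶ R` be the
initial morphism.  Define `x ≤_A y` on `Sigma0(X)` by: `i_R(x) ≤ i_R(y)` for all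
representations `R` of `(S, A)`.  Then for any algebraic `S`-module `V` (given by a
code `c`), any set `X` and any `x, y ∈ V(Sigma0)(X)`: `x ≤_A y` — with respect to the
preorder induced componentwise by `≤_A` — if and only if for all representations `R`
of `(S, A)`, `V(i_R)(x) ≤ V(i_R)(y)` in `V(R)(X)`. -/
theorem algebraic_order_characterisation (S : Sig.{u}) (A : Set (Ineq S))
    (Sigma0 : SigRep S) (hInit : Limits.IsInitial Sigma0) (c : AlgCode.{u}) (X : Type u)
    (x y : ((algSMod S c).M Sigma0).obj X) :
    algRel Sigma0
      (fun Z a b => ∀ R : SigRep S, (∀ e ∈ A, satisfies R e) →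
        (hInit.to R).mh.app Z a ≤ (hInit.to R).mh.app Z b) c X x y
    ↔ (∀ R : SigRep S, (∀ e ∈ A, satisfies R e) →
        ((algSMod S c).Mmap (hInit.to R)).app X x
          ≤ ((algSMod S c).Mmap (hInit.to R)).app X y) := by
  simp only [algRel_forall, algRel_comap_le_iff]
end
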